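/- Consider alternating gradient descent on the BLAST factorization loss ℓ(U_*, V_*, s_{*,*}) = Σ_{i,j} (1/2)‖A_{i,j} − U_i diag(s_{i,j}) V_j^T‖_F², with updates first on all U_i, then all V_j, then all s_{i,j}. If the step sizes satisfy 0 < η_{U_i} ≤ 1/σ₁(V̄_i^T V̄_i), 0 < η_{V_j} ≤ 1/σ₁(Ū_j^T Ū_j), and 0 < η_{s_{i,j}} ≤ 1/σ₁((U_i'^T U_i') ⊙ (V_j'^T V_j')) (with U_i', V_j' the freshly updated factors), then the loss is monotonically non-increasing: ℓ(U_*^{(k+1)}, V_*^{(k+1)}, s_{*,*}^{(k+1)}) ≤ ℓ(U_*^{(k)}, V_*^{(k)}, s_{*,*}^{(k)}). -/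

import Mathlib

/-!
Each of the three sweeps is a gradient step on a linear least-squares problem `½‖b - T x‖²`:
for fixed `i` in `U_i`, for fixed `j` in `V_j` (after transposing every block), and for fixed
`(i, j)` in `s_{i,j}`, where `U diag(x) Vᵀ` is linear in `x` with Gram matrix `(UᵀU) ⊙ (VᵀV)`.
With `g = Tᵀ(T x - b)` one has `‖b - T(x - η g)‖² = ‖b - T x‖² - 2η‖g‖² + η²‖T g‖²` and
`‖T g‖² ≤ σ₁(TᵀT) ‖g‖²`, so the step cannot increase the loss once `η σ₁(TᵀT) ≤ 2`.
-/

open Matrix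

/-- The largest singular value of a real matrix, realized as the operator norm of the
associated Euclidean linear map. -/
noncomputable def sigma1 {m n : ℕ} (M : Matrix (Fin m) (Fin n) ℝ) : ℝ :=
  ‖LinearMap.toContinuousLinearMap (Matrix.toEuclideanLin M)‖

lemma sigma1_nonneg {m n : ℕ} (M : Matrix (Fin m) (Fin n) ℝ) : 0 ≤ sigma1 M := norm_nonneg _

lemma dotProduct_mulVec_le_sigma1 {n : ℕ} (H : Matrix (Fin n) (Fin n) ℝ) (v : Fin n → ℝ) :
    v ⬝ᵥ (H *ᵥ v) ≤ sigma1 H * (v ⬝ᵥ v) := by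
  set T := LinearMap.toContinuousLinearMap (Matrix.toEuclideanLin H)
  set w : EuclideanSpace ℝ (Fin n) := WithLp.toLp 2 v
  have hw : ‖w‖ * ‖w‖ = v ⬝ᵥ v := by
    rw [← real_inner_self_eq_norm_mul_norm]; rfl
  calc v ⬝ᵥ (H *ᵥ v) = inner ℝ (T w) w := rfl
    _ ≤ ‖T w‖ * ‖w‖ := real_inner_le_norm _ _
    _ ≤ sigma1 H * ‖w‖ * ‖w‖ := by gcongr; exact T.le_opNorm w
    _ = sigma1 H * (v ⬝ᵥ v) := by rw [mul_assoc, hw]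

section Frobenius

variable {ι κ : Type*} [Fintype ι] [Fintype κ]

def frobeniusSq (Y : Matrix ι κ ℝ) : ℝ := ∑ k, ∑ l, Y k l ^ 2

lemma frobeniusSq_eq_trace (Y : Matrix ι κ ℝ) : frobeniusSq Y = trace (Y * Yᵀ) := by
  simp only [frobeniusSq, trace, diag_apply, mul_apply, transpose_apply, sq]

lemma frobeniusSq_nonneg (Y : Matrix ι κ ℝ) : 0 ≤ frobeniusSq Y := by
  unfold frobeniusSq; positivity

lemma frobeniusSq_transpose (Y : Matrix ι κ ℝ) : frobeniusSq Yᵀ = frobeniusSq Y :=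
  Finset.sum_comm

lemma trace_add_smul_mul_transpose (R D : Matrix ι κ ℝ) (η : ℝ) :
    trace ((R + η • D) * (R + η • D)ᵀ)
      = trace (R * Rᵀ) + 2 * η * trace (R * Dᵀ) + η ^ 2 * trace (D * Dᵀ) := by
  have hDR : trace (D * Rᵀ) = trace (R * Dᵀ) := by
    rw [← trace_transpose, transpose_mul, transpose_transpose]
  simp only [transpose_add, transpose_smul, Matrix.add_mul, Matrix.mul_add, Matrix.smul_mul,
    Matrix.mul_smul, trace_add, trace_smul, hDR, smul_eq_mul]
  ring

lemma trace_mul_mul_transpose_le_sigma1 {n : ℕ} (G : Matrix ι (Fin n) ℝ)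
    (H : Matrix (Fin n) (Fin n) ℝ) :
    trace (G * H * Gᵀ) ≤ sigma1 H * trace (G * Gᵀ) := by
  have hdiag : ∀ k, (G * H * Gᵀ) k k = G k ⬝ᵥ (H *ᵥ G k) := by
    intro k
    simp only [mul_apply, transpose_apply, mulVec, dotProduct, Finset.sum_mul, Finset.mul_sum]
    rw [Finset.sum_comm]
    exact Finset.sum_congr rfl fun _ _ => Finset.sum_congr rfl fun _ _ => by ring
  simp only [trace, diag_apply, hdiag, Finset.mul_sum]
  exact Finset.sum_le_sum fun k _ => (dotProduct_mulVec_le_sigma1 H (G k)).trans_eq rfl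

end Frobenius

lemma trace_mul_diagonal {ι α : Type*} [Fintype ι] [DecidableEq ι] [CommSemiring α]
    (Y : Matrix ι ι α) (g : ι → α) :
    trace (Y * diagonal g) = diag Y ⬝ᵥ g := by
  simp [trace, dotProduct]

lemma trace_mul_diagonal_mul_mul_diagonal {ι α : Type*} [Fintype ι] [DecidableEq ι]
    [CommSemiring α] (P Q : Matrix ι ι α) (x y : ι → α) :
    trace (P * diagonal x * Q * diagonal y) = y ⬝ᵥ ((P ⊙ Qᵀ) *ᵥ x) := by
  simp only [trace, diag_apply, mul_apply, dotProduct, mulVec, hadamard_apply, transpose_apply,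
    Finset.mul_sum, Finset.sum_mul, diagonal_apply, mul_ite, mul_zero, Finset.sum_ite_eq',
    Finset.mem_univ, if_true]
  exact Finset.sum_congr rfl fun _ _ => Finset.sum_congr rfl fun _ _ => by ring

lemma add_two_mul_neg_add_sq_mul_le {a N q σ η : ℝ} (hN : 0 ≤ N) (hq : q ≤ σ * N)
    (hη : 0 ≤ η) (hησ : η * σ ≤ 2) :
    a + 2 * η * -N + η ^ 2 * q ≤ a := by
  nlinarith [mul_le_mul_of_nonneg_left hq (sq_nonneg η),
    mul_le_mul_of_nonneg_right hησ (mul_nonneg hη hN)]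

lemma transpose_mul_diagonal_mul_transpose {ι κ n α : Type*} [Fintype n] [DecidableEq n]
    [CommSemiring α] (U : Matrix ι n α) (d : n → α) (V : Matrix κ n α) :
    (U * diagonal d * Vᵀ)ᵀ = V * diagonal d * Uᵀ := by
  rw [transpose_mul, transpose_mul, transpose_transpose, diagonal_transpose, Matrix.mul_assoc]

section GradientSteps

variable {ι κ J : Type*} [Fintype ι] [Fintype κ] [Fintype J] {n : ℕ}

theorem sum_frobeniusSq_sub_gradStep_le (C : J → Matrix ι κ ℝ) (M : J → Matrix (Fin n) κ ℝ)
    (X : Matrix ι (Fin n) ℝ) {η : ℝ} (hη : 0 ≤ η)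
    (hησ : η * sigma1 (∑ j, M j * (M j)ᵀ) ≤ 2) :
    ∑ j, frobeniusSq (C j - (X - η • ∑ j', (X * M j' - C j') * (M j')ᵀ) * M j)
      ≤ ∑ j, frobeniusSq (C j - X * M j) := by
  set G := ∑ j', (X * M j' - C j') * (M j')ᵀ
  have hres : ∀ j, C j - (X - η • G) * M j = (C j - X * M j) + η • (G * M j) := fun j => by
    rw [Matrix.sub_mul, Matrix.smul_mul]; abel
  have hcross : ∑ j, trace ((C j - X * M j) * (G * M j)ᵀ) = -trace (G * Gᵀ) := by
    have hG : ∑ j, (C j - X * M j) * (M j)ᵀ = -G := by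
      simp only [G, ← Finset.sum_neg_distrib, ← Matrix.neg_mul, neg_sub]
    calc ∑ j, trace ((C j - X * M j) * (G * M j)ᵀ)
        = trace ((∑ j, (C j - X * M j) * (M j)ᵀ) * Gᵀ) := by
          simp only [transpose_mul, ← Matrix.mul_assoc, Matrix.sum_mul, trace_sum]
      _ = -trace (G * Gᵀ) := by rw [hG, Matrix.neg_mul, trace_neg]
  have hquad : ∑ j, trace ((G * M j) * (G * M j)ᵀ) = trace (G * (∑ j, M j * (M j)ᵀ) * Gᵀ) := by
    simp only [transpose_mul, Matrix.mul_sum, Matrix.sum_mul, trace_sum, Matrix.mul_assoc]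
  simp only [frobeniusSq_eq_trace, hres, trace_add_smul_mul_transpose, Finset.sum_add_distrib,
    ← Finset.mul_sum, hcross, hquad]
  exact add_two_mul_neg_add_sq_mul_le (frobeniusSq_eq_trace G ▸ frobeniusSq_nonneg G)
    (trace_mul_mul_transpose_le_sigma1 G _) hη hησ

theorem frobeniusSq_sub_scaleStep_le (A : Matrix ι κ ℝ) (U : Matrix ι (Fin n) ℝ)
    (V : Matrix κ (Fin n) ℝ) (x : Fin n → ℝ) {η : ℝ} (hη : 0 ≤ η)
    (hησ : η * sigma1 ((Uᵀ * U) ⊙ (Vᵀ * V)) ≤ 2) :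
    frobeniusSq (A - U * diagonal (x - η • ((Uᵀ * U) ⊙ (Vᵀ * V) *ᵥ x - diag (Uᵀ * A * V))) * Vᵀ)
      ≤ frobeniusSq (A - U * diagonal x * Vᵀ) := by
  set H := (Uᵀ * U) ⊙ (Vᵀ * V)
  set g := H *ᵥ x - diag (Uᵀ * A * V)
  have hVV : (Vᵀ * V)ᵀ = Vᵀ * V := by rw [transpose_mul, transpose_transpose]
  have hres : A - U * diagonal (x - η • g) * Vᵀ
      = (A - U * diagonal x * Vᵀ) + η • (U * diagonal g * Vᵀ) := by
    rw [show diagonal (x - η • g) = diagonal x - η • diagonal g by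
      rw [← diagonal_smul, diagonal_sub]; rfl]
    rw [Matrix.mul_sub, Matrix.sub_mul, Matrix.mul_smul, Matrix.smul_mul]; abel
  have hcross : trace ((A - U * diagonal x * Vᵀ) * (U * diagonal g * Vᵀ)ᵀ) = -(g ⬝ᵥ g) := by
    calc trace ((A - U * diagonal x * Vᵀ) * (U * diagonal g * Vᵀ)ᵀ)
        = trace (Uᵀ * A * V * diagonal g)
            - trace (Uᵀ * U * diagonal x * (Vᵀ * V) * diagonal g) := by
          rw [transpose_mul_diagonal_mul_transpose, ← Matrix.mul_assoc, trace_mul_comm, ← trace_sub]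
          congr 1
          simp only [Matrix.mul_assoc, Matrix.sub_mul, Matrix.mul_sub]
      _ = -(g ⬝ᵥ g) := by
          rw [trace_mul_diagonal, trace_mul_diagonal_mul_mul_diagonal, hVV, dotProduct_comm g]
          simp only [g, sub_dotProduct]
          ring
  have hquad : trace ((U * diagonal g * Vᵀ) * (U * diagonal g * Vᵀ)ᵀ) = g ⬝ᵥ (H *ᵥ g) := by
    rw [transpose_mul_diagonal_mul_transpose, ← Matrix.mul_assoc, trace_mul_comm]
    calc trace (Uᵀ * (U * diagonal g * Vᵀ * (V * diagonal g)))
        = trace (Uᵀ * U * diagonal g * (Vᵀ * V) * diagonal g) := by simp only [Matrix.mul_assoc]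
      _ = g ⬝ᵥ (H *ᵥ g) := by rw [trace_mul_diagonal_mul_mul_diagonal, hVV]
  rw [frobeniusSq_eq_trace, frobeniusSq_eq_trace, hres, trace_add_smul_mul_transpose, hcross,
    hquad]
  exact add_two_mul_neg_add_sq_mul_le (Finset.sum_nonneg fun i _ => mul_self_nonneg (g i))
    (dotProduct_mulVec_le_sigma1 H g) hη hησ

end GradientSteps

section Blast

variable {β₁ β₂ ι κ : Type*} [Fintype β₁] [Fintype β₂] [Fintype ι] [Fintype κ] {r : ℕ}

noncomputable def blastLoss (A : β₁ → β₂ → Matrix ι κ ℝ) (U : β₁ → Matrix ι (Fin r) ℝ)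
    (V : β₂ → Matrix κ (Fin r) ℝ) (s : β₁ → β₂ → Fin r → ℝ) : ℝ :=
  ∑ i, ∑ j, (1 / 2) * frobeniusSq (A i j - U i * diagonal (s i j) * (V j)ᵀ)

lemma blastLoss_transpose (A : β₁ → β₂ → Matrix ι κ ℝ) (U : β₁ → Matrix ι (Fin r) ℝ)
    (V : β₂ → Matrix κ (Fin r) ℝ) (s : β₁ → β₂ → Fin r → ℝ) :
    blastLoss (fun j i => (A i j)ᵀ) V U (fun j i => s i j) = blastLoss A U V s := by
  unfold blastLoss
  rw [Finset.sum_comm]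
  simp only [← frobeniusSq_transpose (A _ _ - _), transpose_sub,
    transpose_mul_diagonal_mul_transpose]

theorem blastLoss_updateU_le (A : β₁ → β₂ → Matrix ι κ ℝ) (U U' : β₁ → Matrix ι (Fin r) ℝ)
    (V : β₂ → Matrix κ (Fin r) ℝ) (s : β₁ → β₂ → Fin r → ℝ) (η : β₁ → ℝ)
    (hU' : ∀ i, U' i = U i - η i •
      ∑ j, (U i * diagonal (s i j) * (V j)ᵀ - A i j) * (V j * diagonal (s i j)))
    (hη : ∀ i, 0 ≤ η i)
    (hησ : ∀ i, η i * sigma1 (∑ j, diagonal (s i j) * (V j)ᵀ * V j * diagonal (s i j)) ≤ 2) :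
    blastLoss A U' V s ≤ blastLoss A U V s := by
  refine Finset.sum_le_sum fun i _ => ?_
  simp only [← Finset.mul_sum]
  refine mul_le_mul_of_nonneg_left ?_ (by norm_num)
  set M : β₂ → Matrix (Fin r) κ ℝ := fun j => diagonal (s i j) * (V j)ᵀ
  have hM : ∀ j, (M j)ᵀ = V j * diagonal (s i j) := fun j => by
    rw [transpose_mul, transpose_transpose, diagonal_transpose]
  have hU'M : U' i = U i - η i • ∑ j, (U i * M j - A i j) * (M j)ᵀ := by
    simp only [hU', hM, M, Matrix.mul_assoc]
  have hH : ∑ j, M j * (M j)ᵀ = ∑ j, diagonal (s i j) * (V j)ᵀ * V j * diagonal (s i j) := by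
    simp only [hM, M, Matrix.mul_assoc]
  have key := sum_frobeniusSq_sub_gradStep_le (fun j => A i j) M (U i) (hη i) (hH ▸ hησ i)
  rw [← hU'M] at key
  simpa only [M, Matrix.mul_assoc] using key

theorem blastLoss_updateV_le (A : β₁ → β₂ → Matrix ι κ ℝ) (U : β₁ → Matrix ι (Fin r) ℝ)
    (V V' : β₂ → Matrix κ (Fin r) ℝ) (s : β₁ → β₂ → Fin r → ℝ) (η : β₂ → ℝ)
    (hV' : ∀ j, V' j = V j - η j •
      ∑ i, (U i * diagonal (s i j) * (V j)ᵀ - A i j)ᵀ * (U i * diagonal (s i j)))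
    (hη : ∀ j, 0 ≤ η j)
    (hησ : ∀ j, η j * sigma1 (∑ i, diagonal (s i j) * (U i)ᵀ * U i * diagonal (s i j)) ≤ 2) :
    blastLoss A U V' s ≤ blastLoss A U V s := by
  have key := blastLoss_updateU_le (fun j i => (A i j)ᵀ) V V' U (fun j i => s i j) η
    (fun j => by simp only [hV', transpose_sub, transpose_mul_diagonal_mul_transpose]) hη hησ
  rwa [blastLoss_transpose, blastLoss_transpose] at key

theorem blastLoss_updateS_le (A : β₁ → β₂ → Matrix ι κ ℝ) (U : β₁ → Matrix ι (Fin r) ℝ)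
    (V : β₂ → Matrix κ (Fin r) ℝ) (s s' : β₁ → β₂ → Fin r → ℝ) (η : β₁ → β₂ → ℝ)
    (hs' : ∀ i j, s' i j = s i j - η i j •
      (((U i)ᵀ * U i) ⊙ ((V j)ᵀ * V j) *ᵥ s i j - diag ((U i)ᵀ * A i j * V j)))
    (hη : ∀ i j, 0 ≤ η i j)
    (hησ : ∀ i j, η i j * sigma1 (((U i)ᵀ * U i) ⊙ ((V j)ᵀ * V j)) ≤ 2) :
    blastLoss A U V s' ≤ blastLoss A U V s :=
  Finset.sum_le_sum fun i _ => Finset.sum_le_sum fun j _ =>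
    mul_le_mul_of_nonneg_left (hs' i j ▸ frobeniusSq_sub_scaleStep_le _ _ _ _ (hη i j) (hησ i j))
      (by norm_num)

end Blast

/-- Theorem 1: One round of alternating gradient descent on the BLAST
factorization loss — updating all `U_i`, then all `V_j`, then all `s_{i,j}` — with step
sizes bounded by the reciprocals of `σ₁(V̄ᵢᵀV̄ᵢ)`, `σ₁(ŪⱼᵀŪⱼ)`, and
`σ₁((Uᵢ'ᵀUᵢ') ⊙ (Vⱼ'ᵀVⱼ'))` respectively, does not increase the loss. -/
theorem blast_alternating_gd_monotone (b p r : ℕ)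
    (A : Fin b → Fin b → Matrix (Fin p) (Fin p) ℝ)
    (U V U' V' : Fin b → Matrix (Fin p) (Fin r) ℝ)
    (s s' : Fin b → Fin b → (Fin r → ℝ))
    (ηU ηV : Fin b → ℝ) (ηs : Fin b → Fin b → ℝ)
    (L : (Fin b → Matrix (Fin p) (Fin r) ℝ) → (Fin b → Matrix (Fin p) (Fin r) ℝ) →
         (Fin b → Fin b → (Fin r → ℝ)) → ℝ)
    (hL : ∀ Uc Vc sc, L Uc Vc sc = ∑ i, ∑ j, (1 / 2) * ∑ k, ∑ l,
      (A i j k l - (Uc i * Matrix.diagonal (sc i j) * (Vc j)ᵀ) k l) ^ 2)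
    (hU' : ∀ i, U' i = U i - ηU i •
      ∑ j, (U i * Matrix.diagonal (s i j) * (V j)ᵀ - A i j) * (V j * Matrix.diagonal (s i j)))
    (hV' : ∀ j, V' j = V j - ηV j •
      ∑ i, (U' i * Matrix.diagonal (s i j) * (V j)ᵀ - A i j)ᵀ * (U' i * Matrix.diagonal (s i j)))
    (hs' : ∀ i j, s' i j = s i j - ηs i j •
      ((((U' i)ᵀ * U' i).hadamard ((V' j)ᵀ * V' j)).mulVec (s i j)
        - ((U' i)ᵀ * A i j * V' j).diag))
    (hηU : ∀ i, 0 < ηU i ∧ ηU i ≤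
      1 / sigma1 (∑ j, Matrix.diagonal (s i j) * (V j)ᵀ * V j * Matrix.diagonal (s i j)))
    (hηV : ∀ j, 0 < ηV j ∧ ηV j ≤
      1 / sigma1 (∑ i, Matrix.diagonal (s i j) * (U' i)ᵀ * U' i * Matrix.diagonal (s i j)))
    (hηs : ∀ i j, 0 < ηs i j ∧ ηs i j ≤
      1 / sigma1 (((U' i)ᵀ * U' i).hadamard ((V' j)ᵀ * V' j))) :
    L U' V' s' ≤ L U V s := by
  have hLoss : L = blastLoss A := funext fun Uc => funext fun Vc => funext fun sc => hL Uc Vc sc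
  have hstep : ∀ {η σ : ℝ}, 0 < η ∧ η ≤ 1 / σ → 0 ≤ σ → η * σ ≤ 2 := fun h hσ =>
    (mul_le_of_le_div₀ zero_le_one hσ h.2).trans one_le_two
  rw [hLoss]
  calc blastLoss A U' V' s' ≤ blastLoss A U' V' s :=
        blastLoss_updateS_le A U' V' s s' ηs hs' (fun i j => (hηs i j).1.le)
          (fun i j => hstep (hηs i j) (sigma1_nonneg _))
    _ ≤ blastLoss A U' V s :=
        blastLoss_updateV_le A U' V V' s ηV hV' (fun j => (hηV j).1.le)
          (fun j => hstep (hηV j) (sigma1_nonneg _))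
    _ ≤ blastLoss A U V s :=
        blastLoss_updateU_le A U U' V s ηU hU' (fun i => (hηU i).1.le)
          (fun i => hstep (hηU i) (sigma1_nonneg _))
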